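/- For each t ∈ {0,1,…,T−1} and each x ∈ ℕ with x < ξ, there exists k0 ∈ ℕ such that for all k ≥ k0, preventive replacement is strictly suboptimal at (x,k): c_p + E_{(Z,K)}[Ṽ_{t+1}(Z, k+Z+K)] > E_{(Z,K)}[Ṽ_{t+1}(x+Z, k+Z+K)]. Consequently the optimal control limit δ^{(k,t)} converges to the failure threshold ξ as k → ∞. -/

import Mathlib

open Filter

/-- Negative Binomial pmf with real shape `r` and success probability `p`:
`NB(r,p)(z) = Γ(z+r)/(Γ(r)·z!)·p^r·(1−p)^z` for `r > 0`, and `NB(0,p)` is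
the point mass at `0`. -/
noncomputable def NB (r p : ℝ) (z : ℕ) : ℝ :=
  if r = 0 then (if z = 0 then (1 : ℝ) else 0)
  else Real.Gamma ((z : ℝ) + r) / (Real.Gamma r * (Nat.factorial z : ℝ)) * p ^ r * (1 - p) ^ z

/-- `p_t = (β0 + N·t)/(β0 + N·t + 1)`. -/
noncomputable def pt (β0 : ℝ) (N t : ℕ) : ℝ :=
  (β0 + (N : ℝ) * (t : ℝ)) / (β0 + (N : ℝ) * (t : ℝ) + 1)

/-- Expectation `E_{(Z,K)}[f(Z,K)]` with `Z ~ NB(α0+k, p_t)` and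
`K ~ NB((N−1)(α0+k), p_t)` independent. -/
noncomputable def EZK (α0 β0 : ℝ) (N t k : ℕ) (f : ℕ → ℕ → ℝ) : ℝ :=
  ∑' z : ℕ, ∑' κ : ℕ,
    NB (α0 + (k : ℝ)) (pt β0 N t) z * NB (((N : ℝ) - 1) * (α0 + (k : ℝ))) (pt β0 N t) κ * f z κ

/-!
Once the failure threshold is reached, `Ṽ_{t+1}(y, m)` no longer depends on `y ≥ ξ`, so the
cost of continuing from `x` and the cost of preventive replacement differ only on the event
`Z < ξ`. Since negative binomial laws are probability distributions (negative binomial series),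
`Ṽ_{t+1}` is bounded by `(T - t) c_u`, and the difference of the two expectations is at most this
bound times `P(Z < ξ)`. Each mass `NB(α0 + k, p)(z)` is a polynomial in `k` times `p ^ k`, so
`P(Z < ξ) → 0` as `k → ∞`, and eventually the difference is below `c_p`. At `x = ξ - 1` this
forces the control limit to equal `ξ` for all large `k`.
-/

open Filter Topology Polynomial Set
open scoped Nat

lemma Real.Gamma_nat_add_eq_mul_ascPochhammer {r : ℝ} (hr : 0 < r) (n : ℕ) :
    Real.Gamma (n + r) = Real.Gamma r * (ascPochhammer ℝ n).eval r := by
  induction n with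
  | zero => simp
  | succ n ih =>
    rw [Nat.cast_succ, add_right_comm, Real.Gamma_add_one (by positivity), ih,
      ascPochhammer_succ_eval]
    ring

lemma ascPochhammer_eval_div_factorial (r : ℝ) (n : ℕ) :
    (ascPochhammer ℝ n).eval r / n ! = Ring.choose (r + n - 1) n := by
  rw [Ring.choose_eq_smul, descPochhammer_smeval_eq_ascPochhammer, ascPochhammer_smeval_eq_eval,
    smul_eq_mul, show r + n - 1 - n + 1 = r by ring, inv_mul_eq_div]

lemma ascPochhammer_eval_le_pow {r : ℝ} (hr : 0 ≤ r) (n : ℕ) :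
    (ascPochhammer ℝ n).eval r ≤ (r + n) ^ n := by
  induction n with
  | zero => simp
  | succ n ih =>
    rw [ascPochhammer_succ_eval, pow_succ, Nat.cast_succ]
    have hpos : 0 ≤ (ascPochhammer ℝ n).eval r := by
      rcases hr.eq_or_lt with rfl | hr
      · rw [ascPochhammer_eval_zero]; split_ifs <;> norm_num
      · exact (ascPochhammer_pos n r hr).le
    gcongr
    · exact ih.trans (by gcongr; linarith)
    · linarith

lemma NB_eq_ascPochhammer {r : ℝ} (hr : 0 ≤ r) (p : ℝ) (z : ℕ) :
    NB r p z = (ascPochhammer ℝ z).eval r / z ! * p ^ r * (1 - p) ^ z := by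
  rcases hr.eq_or_lt with rfl | hr
  · rcases z.eq_zero_or_pos with rfl | hz
    · simp [NB]
    · simp [NB, ascPochhammer_ne_zero_eval_zero _ hz.ne', hz.ne']
  · rw [NB, if_neg hr.ne', Real.Gamma_nat_add_eq_mul_ascPochhammer hr]
    have := Real.Gamma_pos_of_pos hr
    field_simp

lemma NB_nonneg {r p : ℝ} (hr : 0 ≤ r) (hp0 : 0 ≤ p) (hp1 : p ≤ 1) (z : ℕ) :
    0 ≤ NB r p z := by
  have : 0 ≤ 1 - p := by linarith
  unfold NB
  split_ifs <;> positivity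

lemma hasSum_NB {r p : ℝ} (hr : 0 ≤ r) (hp0 : 0 < p) (hp1 : p ≤ 1) : HasSum (NB r p) 1 := by
  have hq : 1 - p ∈ Metric.eball (0 : ℝ) 1 := by
    rw [Metric.mem_eball, edist_dist, dist_zero_right, Real.norm_eq_abs,
      abs_of_nonneg (by linarith)]
    exact ENNReal.ofReal_lt_one.2 (by linarith)
  have hsum :=
    ((Real.one_div_one_sub_rpow_hasFPowerSeriesOnBall_zero r).hasSum hq).mul_left (p ^ r)
  simp only [FormalMultilinearSeries.ofScalars_apply_eq, zero_add, sub_sub_cancel, smul_eq_mul,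
    mul_one_div_cancel (Real.rpow_pos_of_pos hp0 r).ne'] at hsum
  refine (funext fun z => ?_ : NB r p = _) ▸ hsum
  rw [NB_eq_ascPochhammer hr, ← ascPochhammer_eval_div_factorial]
  ring

lemma tendsto_add_pow_mul_pow_atTop_nhds_zero (c : ℝ) (n : ℕ) {q : ℝ} (hq : |q| < 1) :
    Tendsto (fun k : ℕ => (c + k) ^ n * q ^ k) atTop (𝓝 0) := by
  have h1 : Tendsto (fun k : ℕ => (1 + c / k) ^ n) atTop (𝓝 1) := by
    simpa using ((tendsto_const_div_atTop_nhds_zero_nat c).const_add 1).pow n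
  have h2 := tendsto_pow_const_mul_const_pow_of_abs_lt_one n hq
  refine (by simpa using h1.mul h2 :
    Tendsto (fun k : ℕ => (1 + c / k) ^ n * (k ^ n * q ^ k)) atTop (𝓝 0)).congr' ?_
  filter_upwards [eventually_ne_atTop 0] with k hk
  rw [← mul_assoc, ← mul_pow, add_mul, div_mul_cancel₀ _ (Nat.cast_ne_zero.2 hk), one_mul,
    add_comm]

lemma tendsto_NB_add_atTop {a p : ℝ} (ha : 0 ≤ a) (hp0 : 0 < p) (hp1 : p < 1) (z : ℕ) :
    Tendsto (fun k : ℕ => NB (a + k) p z) atTop (𝓝 0) := by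
  have hlim := (tendsto_add_pow_mul_pow_atTop_nhds_zero (a + z) z
    (abs_lt.2 ⟨by linarith, hp1⟩)).const_mul (p ^ a * (1 - p) ^ z / z !)
  rw [mul_zero] at hlim
  refine squeeze_zero (fun k => NB_nonneg (by positivity) hp0.le hp1.le z) (fun k => ?_) hlim
  have h1p : 0 ≤ 1 - p := by linarith
  rw [NB_eq_ascPochhammer (by positivity), Real.rpow_add hp0, Real.rpow_natCast]
  calc (ascPochhammer ℝ z).eval (a + k) / z ! * (p ^ a * p ^ k) * (1 - p) ^ z
      ≤ (a + k + z) ^ z / z ! * (p ^ a * p ^ k) * (1 - p) ^ z := by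
        gcongr; exact ascPochhammer_eval_le_pow (by positivity) z
    _ = p ^ a * (1 - p) ^ z / z ! * ((a + z + k) ^ z * p ^ k) := by ring

section WeightedSums

variable {ι : Type*} {a f g : ι → ℝ} {M : ℝ}

lemma summable_mul_of_mem_Icc (ha0 : ∀ i, 0 ≤ a i) (ha : Summable a)
    (hf : ∀ i, f i ∈ Icc 0 M) : Summable fun i => a i * f i :=
  Summable.of_nonneg_of_le (fun i => mul_nonneg (ha0 i) (hf i).1)
    (fun i => mul_le_mul_of_nonneg_left (hf i).2 (ha0 i)) (ha.mul_right M)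

lemma tsum_mul_mem_Icc (ha0 : ∀ i, 0 ≤ a i) (ha : HasSum a 1) (hf : ∀ i, f i ∈ Icc 0 M) :
    ∑' i, a i * f i ∈ Icc 0 M := by
  refine ⟨tsum_nonneg fun i => mul_nonneg (ha0 i) (hf i).1, ?_⟩
  calc ∑' i, a i * f i ≤ ∑' i, a i * M :=
        Summable.tsum_le_tsum (fun i => mul_le_mul_of_nonneg_left (hf i).2 (ha0 i))
          (summable_mul_of_mem_Icc ha0 ha.summable hf) (ha.summable.mul_right M)
    _ = M := by rw [tsum_mul_right, ha.tsum_eq, one_mul]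

lemma tsum_mul_sub_tsum_mul_le (ha0 : ∀ i, 0 ≤ a i) (ha : Summable a)
    (hf : ∀ i, f i ∈ Icc 0 M) (hg : ∀ i, g i ∈ Icc 0 M) {s : Finset ι}
    (hfg : ∀ i ∉ s, f i = g i) :
    ∑' i, a i * f i - ∑' i, a i * g i ≤ M * ∑ i ∈ s, a i := by
  rw [← (summable_mul_of_mem_Icc ha0 ha hf).tsum_sub (summable_mul_of_mem_Icc ha0 ha hg),
    tsum_eq_sum fun i hi => by rw [hfg i hi, sub_self], Finset.mul_sum]
  refine Finset.sum_le_sum fun i _ => ?_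
  nlinarith [ha0 i, (hf i).2, (hg i).1]

end WeightedSums

lemma pt_pos {β0 : ℝ} (hβ0 : 0 < β0) (N t : ℕ) : 0 < pt β0 N t := by
  unfold pt; positivity

lemma pt_lt_one {β0 : ℝ} (hβ0 : 0 < β0) (N t : ℕ) : pt β0 N t < 1 := by
  rw [pt, div_lt_one (by positivity)]
  linarith

lemma EZK_eq_tsum_mul_tsum (α0 β0 : ℝ) (N t k : ℕ) (f : ℕ → ℕ → ℝ) :
    EZK α0 β0 N t k f = ∑' z, NB (α0 + k) (pt β0 N t) z *
      ∑' κ, NB ((N - 1) * (α0 + k)) (pt β0 N t) κ * f z κ := by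
  simp only [EZK, ← tsum_mul_left, mul_assoc]

section EZK

variable {α0 β0 : ℝ} {N : ℕ} {f g : ℕ → ℕ → ℝ} {M : ℝ}

lemma EZK_mem_Icc (hα0 : 0 ≤ α0) (hβ0 : 0 < β0) (hN : 1 ≤ N) (t k : ℕ)
    (hf : ∀ z κ, f z κ ∈ Icc 0 M) : EZK α0 β0 N t k f ∈ Icc 0 M := by
  have hp0 := pt_pos hβ0 N t
  have hp1 := (pt_lt_one hβ0 N t).le
  have hr : 0 ≤ ((N : ℝ) - 1) * (α0 + k) :=
    mul_nonneg (sub_nonneg.2 (by exact_mod_cast hN)) (by positivity)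
  rw [EZK_eq_tsum_mul_tsum]
  exact tsum_mul_mem_Icc (NB_nonneg (by positivity) hp0.le hp1)
    (hasSum_NB (by positivity) hp0 hp1) fun z =>
      tsum_mul_mem_Icc (NB_nonneg hr hp0.le hp1) (hasSum_NB hr hp0 hp1) (hf z)

lemma EZK_sub_EZK_le (hα0 : 0 ≤ α0) (hβ0 : 0 < β0) (hN : 1 ≤ N) (t k ξ : ℕ)
    (hf : ∀ z κ, f z κ ∈ Icc 0 M) (hg : ∀ z κ, g z κ ∈ Icc 0 M)
    (hfg : ∀ z κ, ξ ≤ z → f z κ = g z κ) :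
    EZK α0 β0 N t k f - EZK α0 β0 N t k g ≤
      M * ∑ z ∈ Finset.range ξ, NB (α0 + k) (pt β0 N t) z := by
  have hp0 := pt_pos hβ0 N t
  have hp1 := (pt_lt_one hβ0 N t).le
  have hr : 0 ≤ ((N : ℝ) - 1) * (α0 + k) :=
    mul_nonneg (sub_nonneg.2 (by exact_mod_cast hN)) (by positivity)
  have hinner := fun (h : ℕ → ℕ → ℝ) (hh : ∀ z κ, h z κ ∈ Icc 0 M) z =>
    tsum_mul_mem_Icc (NB_nonneg hr hp0.le hp1) (hasSum_NB hr hp0 hp1) (hh z)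
  rw [EZK_eq_tsum_mul_tsum, EZK_eq_tsum_mul_tsum]
  refine tsum_mul_sub_tsum_mul_le (NB_nonneg (by positivity) hp0.le hp1)
    (hasSum_NB (by positivity) hp0 hp1).summable (hinner f hf) (hinner g hg) fun z hz => ?_
  simp only [hfg z _ (by simpa using hz)]

end EZK

structure IsValueFunction (α0 β0 : ℝ) (N T ξ : ℕ) (cp cu : ℝ)
    (V : ℕ → ℕ → ℕ → ℝ) : Prop where
  terminal : ∀ x k, V T x k = if ξ ≤ x then cu else 0
  failed : ∀ t, t < T → ∀ x k, ξ ≤ x →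
    V t x k = cu + EZK α0 β0 N t k (fun z κ => V (t + 1) z (k + z + κ))
  operating : ∀ t, t < T → ∀ x k, x < ξ →
    V t x k = min (cp + EZK α0 β0 N t k (fun z κ => V (t + 1) z (k + z + κ)))
      (EZK α0 β0 N t k (fun z κ => V (t + 1) (x + z) (k + z + κ)))

namespace IsValueFunction

variable {α0 β0 : ℝ} {N T ξ : ℕ} {cp cu : ℝ} {V : ℕ → ℕ → ℕ → ℝ}

lemma eq_of_threshold_le (hV : IsValueFunction α0 β0 N T ξ cp cu V) {t : ℕ} (ht : t ≤ T)
    {x y : ℕ} (hx : ξ ≤ x) (hy : ξ ≤ y) (k : ℕ) : V t x k = V t y k := by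
  rcases ht.lt_or_eq with ht | rfl
  · rw [hV.failed t ht x k hx, hV.failed t ht y k hy]
  · rw [hV.terminal, hV.terminal, if_pos hx, if_pos hy]

lemma mem_Icc (hV : IsValueFunction α0 β0 N T ξ cp cu V) (hα0 : 0 ≤ α0) (hβ0 : 0 < β0)
    (hN : 1 ≤ N) (hcp : 0 ≤ cp) (hcu : 0 ≤ cu) {t : ℕ} (ht : t ≤ T) (x k : ℕ) :
    V t x k ∈ Icc 0 ((T + 1 - t : ℕ) * cu) := by
  induction ht using Nat.decreasingInduction generalizing x k with
  | self =>
    rw [hV.terminal, Nat.add_sub_cancel_left, Nat.cast_one, one_mul]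
    split_ifs
    · exact ⟨hcu, le_rfl⟩
    · exact ⟨le_rfl, hcu⟩
  | of_succ t ht ih =>
    have hM : ((T + 1 - t : ℕ) : ℝ) * cu = cu + ((T + 1 - (t + 1) : ℕ) : ℝ) * cu := by
      rw [show T + 1 - t = T + 1 - (t + 1) + 1 by omega]
      push_cast
      ring
    have hE := fun y => EZK_mem_Icc hα0 hβ0 hN t k
      (f := fun z κ => V (t + 1) (y + z) (k + z + κ)) fun z κ => ih _ _
    have hE0 := EZK_mem_Icc hα0 hβ0 hN t k
      (f := fun z κ => V (t + 1) z (k + z + κ)) fun z κ => ih _ _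
    rcases le_or_gt ξ x with hx | hx
    · rw [hV.failed t ht x k hx, hM]
      exact ⟨by linarith [hE0.1], by linarith [hE0.2]⟩
    · rw [hV.operating t ht x k hx, hM]
      exact ⟨le_min (by linarith [hE0.1]) (hE x).1,
        (min_le_right _ _).trans (by linarith [(hE x).2])⟩

lemma eventually_continue_lt_replace (hV : IsValueFunction α0 β0 N T ξ cp cu V)
    (hα0 : 0 ≤ α0) (hβ0 : 0 < β0) (hN : 1 ≤ N) (hcp : 0 < cp) (hcu : 0 ≤ cu) {t : ℕ}
    (ht : t < T) (x : ℕ) :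
    ∀ᶠ k in atTop, EZK α0 β0 N t k (fun z κ => V (t + 1) (x + z) (k + z + κ)) <
      cp + EZK α0 β0 N t k (fun z κ => V (t + 1) z (k + z + κ)) := by
  set M : ℝ := ((T + 1 - (t + 1) : ℕ) : ℝ) * cu
  have hbound := hV.mem_Icc hα0 hβ0 hN hcp.le hcu ht
  have hsmall : Tendsto (fun k : ℕ => M * ∑ z ∈ Finset.range ξ, NB (α0 + k) (pt β0 N t) z)
      atTop (𝓝 0) := by
    simpa using (tendsto_finsetSum _ fun z _ =>
      tendsto_NB_add_atTop hα0 (pt_pos hβ0 N t) (pt_lt_one hβ0 N t) z).const_mul M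
  filter_upwards [hsmall.eventually (gt_mem_nhds hcp)] with k hk
  have := EZK_sub_EZK_le hα0 hβ0 hN t k ξ (f := fun z κ => V (t + 1) (x + z) (k + z + κ))
    (g := fun z κ => V (t + 1) z (k + z + κ)) (fun z κ => hbound _ _) (fun z κ => hbound _ _)
    fun z κ hz => hV.eq_of_threshold_le ht (by omega) hz (k + z + κ)
  linarith

end IsValueFunction

theorem control_limit_to_threshold_general
    (α0 β0 : ℝ) (hα0 : 0 < α0) (hβ0 : 0 < β0)
    (N T : ℕ) (hN : 1 ≤ N)
    (ξ : ℕ)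
    (cp cu : ℝ) (hcp : 0 < cp) (hcpcu : cp < cu)
    (V : ℕ → ℕ → ℕ → ℝ)
    (hVT : ∀ x k, V T x k = if ξ ≤ x then cu else 0)
    (hVfail : ∀ t, t < T → ∀ x k, ξ ≤ x →
      V t x k = cu + EZK α0 β0 N t k (fun z κ => V (t + 1) z (k + z + κ)))
    (hVop : ∀ t, t < T → ∀ x k, x < ξ →
      V t x k =
        min (cp + EZK α0 β0 N t k (fun z κ => V (t + 1) z (k + z + κ)))
          (EZK α0 β0 N t k (fun z κ => V (t + 1) (x + z) (k + z + κ)))) :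
    ∀ t, t < T →
      ((∀ x : ℕ, x < ξ → ∃ k0 : ℕ, ∀ k : ℕ, k0 ≤ k →
          EZK α0 β0 N t k (fun z κ => V (t + 1) (x + z) (k + z + κ)) <
            cp + EZK α0 β0 N t k (fun z κ => V (t + 1) z (k + z + κ))) ∧
        (∀ δ : ℕ → ℕ,
          (∀ k : ℕ, 0 < δ k ∧ δ k ≤ ξ ∧
            ∀ x : ℕ, x < ξ →
              ((cp + EZK α0 β0 N t k (fun z κ => V (t + 1) z (k + z + κ)) ≤
                  EZK α0 β0 N t k (fun z κ => V (t + 1) (x + z) (k + z + κ))) ↔ δ k ≤ x)) →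
          Filter.Tendsto δ Filter.atTop (nhds ξ))) := by
  intro t ht
  have hV : IsValueFunction α0 β0 N T ξ cp cu V := ⟨hVT, hVfail, hVop⟩
  have hcontinue x := eventually_atTop.1 <|
    hV.eventually_continue_lt_replace hα0.le hβ0 hN hcp (hcp.trans hcpcu).le ht x
  refine ⟨fun x _ => hcontinue x, fun δ hδ => ?_⟩
  obtain ⟨k0, hk0⟩ := hcontinue (ξ - 1)
  refine tendsto_const_nhds.congr' (eventually_atTop.2 ⟨k0, fun k hk => ?_⟩)
  obtain ⟨hpos, hle, hiff⟩ := hδ k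
  have hlarge : ¬δ k ≤ ξ - 1 := mt (hiff (ξ - 1) (by omega)).2 (hk0 k hk).not_ge
  omega

/-- As the pooled data `k` grows, preventive replacement becomes strictly suboptimal
at every `x < ξ`; consequently any optimal control limit `δ^{(k,t)}` converges to `ξ`. -/
theorem control_limit_to_threshold
    (α0 β0 : ℝ) (hα0 : 0 < α0) (hβ0 : 0 < β0)
    (N T : ℕ) (hN : 1 ≤ N) (hT : 1 ≤ T)
    (ξ : ℕ) (hξ : 1 ≤ ξ)
    (cp cu : ℝ) (hcp : 0 < cp) (hcpcu : cp < cu)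
    (V : ℕ → ℕ → ℕ → ℝ)
    (hVT : ∀ x k, V T x k = if ξ ≤ x then cu else 0)
    (hVfail : ∀ t, t < T → ∀ x k, ξ ≤ x →
      V t x k = cu + EZK α0 β0 N t k (fun z κ => V (t + 1) z (k + z + κ)))
    (hVop : ∀ t, t < T → ∀ x k, x < ξ →
      V t x k =
        min (cp + EZK α0 β0 N t k (fun z κ => V (t + 1) z (k + z + κ)))
          (EZK α0 β0 N t k (fun z κ => V (t + 1) (x + z) (k + z + κ)))) :
    ∀ t, t < T →
      ((∀ x : ℕ, x < ξ → ∃ k0 : ℕ, ∀ k : ℕ, k0 ≤ k →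
          EZK α0 β0 N t k (fun z κ => V (t + 1) (x + z) (k + z + κ)) <
            cp + EZK α0 β0 N t k (fun z κ => V (t + 1) z (k + z + κ))) ∧
        (∀ δ : ℕ → ℕ,
          (∀ k : ℕ, 0 < δ k ∧ δ k ≤ ξ ∧
            ∀ x : ℕ, x < ξ →
              ((cp + EZK α0 β0 N t k (fun z κ => V (t + 1) z (k + z + κ)) ≤
                  EZK α0 β0 N t k (fun z κ => V (t + 1) (x + z) (k + z + κ))) ↔ δ k ≤ x)) →
          Filter.Tendsto δ Filter.atTop (nhds ξ))) :=
  control_limit_to_threshold_general α0 β0 hα0 hβ0 N T hN ξ cp cu hcp hcpcu V hVT hVfail hVop
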